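/- Let h : ℝⁿ → ℝⁿ be a C¹ diffeomorphism such that at every point z, each row of the Jacobian Dh(z) has at most one nonzero entry. Then by invertibility, each row has exactly one nonzero entry at every point, and the position of the nonzero entry in each row is constant in z (i.e., there is a fixed permutation σ such that ∂h_i/∂z_j ≡ 0 whenever j ≠ σ(i)), provided ℝⁿ is connected and Dh(z) is invertible everywhere. -/

import Mathlib

/-!
For a row `i`, the sets `U j = {z | ∂ⱼhᵢ(z) ≠ 0}` are open because `h` is C¹, pairwise disjoint by
the row condition, and cover `ℝⁿ` because a surjective Jacobian has no zero row; by connectedness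
one of them, `U (σ i)`, is all of `ℝⁿ`. Hence `hᵢ` is constant along every direction whose
`σ i`-th coordinate vanishes, and `σ` is a permutation since a column of the Jacobian missed by `σ`
would be zero, contradicting injectivity.
-/

open Set Function

theorem exists_eq_univ_of_pairwise_disjoint_open_cover {X ι : Type*} [TopologicalSpace X]
    [PreconnectedSpace X] [Nonempty X] {U : ι → Set X} (hopen : ∀ i, IsOpen (U i))
    (hdisj : Pairwise (Disjoint on U)) (hcover : ⋃ i, U i = univ) :
    ∃ i, U i = univ := by
  obtain ⟨x⟩ := ‹Nonempty X›
  have hmem : ∀ y, ∃ i, y ∈ U i := fun y => mem_iUnion.mp (hcover ▸ mem_univ y)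
  obtain ⟨i, hi⟩ := hmem x
  refine ⟨i, IsClopen.eq_univ ⟨?_, hopen i⟩ ⟨x, hi⟩⟩
  refine isOpen_compl_iff.mp (isOpen_iff_forall_mem_open.mpr fun y hy => ?_)
  obtain ⟨j, hj⟩ := hmem y
  have hji : j ≠ i := by rintro rfl; exact hy hj
  exact ⟨U j, (hdisj hji).subset_compl_right, hopen j, hj⟩

theorem apply_add_eq_of_forall_hasFDerivAt_apply_eq_zero {E F : Type*} [NormedAddCommGroup E]
    [NormedSpace ℝ E] [NormedAddCommGroup F] [NormedSpace ℝ F] {f : E → F} {f' : E → E →L[ℝ] F}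
    {v : E} (hf : ∀ x, HasFDerivAt f (f' x) x) (hv : ∀ x, f' x v = 0) (x : E) :
    f (x + v) = f x := by
  have hline : ∀ t : ℝ, HasDerivAt (fun t : ℝ => f (x + t • v)) 0 t := fun t => by
    have hpath : HasDerivAt (fun t : ℝ => x + t • v) v t := by
      simpa using ((hasDerivAt_id t).smul_const v).const_add x
    have hcomp := (hf _).comp_hasDerivAt t hpath
    rwa [hv] at hcomp
  simpa using is_const_of_deriv_eq_zero (fun t => (hline t).differentiableAt)
    (fun t => (hline t).deriv) 1 0

namespace LinearMap

variable {R M ι κ : Type*} [DecidableEq ι] [Semiring R]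

theorem apply_eq_zero_of_forall_apply_single [Fintype ι] [AddCommMonoid M] [Module R M]
    {F : Type*} [FunLike F (ι → R) M] [LinearMapClass F R (ι → R) M] (L : F) {v : ι → R}
    (hv : ∀ k, v k = 0 ∨ L (Pi.single k 1) = 0) : L v = 0 := by
  rw [← Finset.univ_sum_single v, map_sum]
  refine Finset.sum_eq_zero fun k _ => ?_
  rcases hv k with hk | hk
  · rw [hk, Pi.single_zero, map_zero]
  · rw [← mul_one (v k), ← smul_eq_mul, Pi.single_smul', map_smul, hk, smul_zero]

variable [Nontrivial R]

theorem exists_apply_single_apply_ne_zero_of_surjective [Fintype ι] [DecidableEq κ]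
    {L : (ι → R) →ₗ[R] (κ → R)} (hL : Surjective L) (i : κ) : ∃ j, L (Pi.single j 1) i ≠ 0 := by
  by_contra! hrow
  obtain ⟨v, hv⟩ := hL (Pi.single i 1)
  have hvi : (proj i ∘ₗ L) v = 0 :=
    apply_eq_zero_of_forall_apply_single (proj i ∘ₗ L) fun k => .inr (hrow k)
  simp [hv] at hvi

theorem surjective_of_injective_of_apply_single_apply_eq_zero {L : (ι → R) →ₗ[R] (κ → R)}
    (hL : Injective L) {σ : κ → ι} (hσ : ∀ i k, k ≠ σ i → L (Pi.single k 1) i = 0) :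
    Surjective σ := by
  intro j
  by_contra! hj
  have hcol : L (Pi.single j 1) = 0 := funext fun i => hσ i j (hj i).symm
  simp [L.map_eq_zero_iff hL] at hcol

end LinearMap

section

variable {ι κ : Type*} [Fintype ι] [DecidableEq ι] {h : (ι → ℝ) → κ → ℝ}

theorem exists_forall_fderiv_apply_single_apply_eq_zero_of_ne [DecidableEq κ]
    (hcont : Continuous (fderiv ℝ h)) (hsurj : ∀ z, Surjective (fderiv ℝ h z))
    (hrow : ∀ z i j k, fderiv ℝ h z (Pi.single j 1) i ≠ 0 →
      fderiv ℝ h z (Pi.single k 1) i ≠ 0 → j = k) (i : κ) :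
    ∃ j, ∀ z k, k ≠ j → fderiv ℝ h z (Pi.single k 1) i = 0 := by
  let U : ι → Set (ι → ℝ) := fun k => {z | fderiv ℝ h z (Pi.single k 1) i ≠ 0}
  have hopen : ∀ k, IsOpen (U k) := fun k =>
    isOpen_ne.preimage ((continuous_apply i).comp
      ((continuous_eval_const (Pi.single k 1)).comp hcont))
  have hdisj : Pairwise (Disjoint on U) := fun k l hkl =>
    disjoint_left.mpr fun z hk hl => hkl (hrow z i k l hk hl)
  have hcover : ⋃ k, U k = univ := eq_univ_of_forall fun z => mem_iUnion.mpr
    (LinearMap.exists_apply_single_apply_ne_zero_of_surjective (L := (fderiv ℝ h z).toLinearMap)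
      (hsurj z) i)
  obtain ⟨j, hj⟩ := exists_eq_univ_of_pairwise_disjoint_open_cover hopen hdisj hcover
  refine ⟨j, fun z k hkj => ?_⟩
  by_contra hk
  exact hkj (hrow z i k j hk (show z ∈ U j from hj ▸ mem_univ z))

theorem apply_eq_apply_single_of_fderiv_apply_single_apply_eq_zero (hh : Differentiable ℝ h)
    {i : κ} {j : ι} (hzero : ∀ z k, k ≠ j → fderiv ℝ h z (Pi.single k 1) i = 0) (z : ι → ℝ) :
    h z i = h (Pi.single j (z j)) i := by
  have hcoord : ∀ x, HasFDerivAt (fun x => h x i)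
      ((ContinuousLinearMap.proj i).comp (fderiv ℝ h x)) x := fun x =>
    hasFDerivAt_pi'.mp (hh x).hasFDerivAt i
  have hdir : ∀ x, fderiv ℝ h x (z - Pi.single j (z j)) i = 0 := fun x =>
    LinearMap.apply_eq_zero_of_forall_apply_single (ContinuousLinearMap.proj i ∘L fderiv ℝ h x)
      (v := z - Pi.single j (z j)) fun k =>
        if hk : k = j then .inl (by simp [hk]) else .inr (hzero x k hk)
  simpa using apply_add_eq_of_forall_hasFDerivAt_apply_eq_zero hcoord hdir (Pi.single j (z j))

end

/-- If a C¹ map with everywhere invertible Jacobian has at most one nonzero entry per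
Jacobian row at every point, then h_i(z) = T_i(z_{σ(i)}) for a fixed permutation σ. -/
theorem stmt9 {n : ℕ} (h : (Fin n → ℝ) → (Fin n → ℝ))
    (hC1 : ContDiff ℝ 1 h)
    (hinv : ∀ z, Function.Bijective (fderiv ℝ h z))
    (hrow : ∀ z i j k, (fderiv ℝ h z (Pi.single j 1)) i ≠ 0 →
      (fderiv ℝ h z (Pi.single k 1)) i ≠ 0 → j = k) :
    ∃ (σ : Equiv.Perm (Fin n)) (T : Fin n → ℝ → ℝ),
      ∀ z i, h z i = T i (z (σ i)) := by
  choose σ hσ using exists_forall_fderiv_apply_single_apply_eq_zero_of_ne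
    (hC1.continuous_fderiv one_ne_zero) (fun z => (hinv z).2) hrow
  have hσ_surj : Surjective σ :=
    LinearMap.surjective_of_injective_of_apply_single_apply_eq_zero
      (L := (fderiv ℝ h 0).toLinearMap) (hinv 0).1 fun i k => hσ i 0 k
  exact ⟨Equiv.ofBijective σ hσ_surj.bijective_of_finite, fun i t => h (Pi.single (σ i) t) i,
    fun z i => apply_eq_apply_single_of_fderiv_apply_single_apply_eq_zero
      (hC1.differentiable one_ne_zero) (hσ i) z⟩
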